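/- arXiv:1709.04266 — 2 statements merged into one kernel-verified Lean document; each statement's English description precedes it below -/
import Mathlib

section
/- Let c : ℝ → ℝ be continuous and u₁, u₂ ∈ {-1,1} with u₁ ≠ u₂. Suppose there is τ such that for t < τ near τ, u₁ is a maximizer of v ↦ v·c(t) − |v|·d(t) on [-1,1], and for t > τ near τ, u₂ is a maximizer, where d : ℝ → ℝ is continuous and nonnegative. Then d(τ) = 0 (and c(τ) = 0). -/
/-!
Testing the maximality of `uᵢ` against the competitor `v = 0` gives `|uᵢ| d(t) ≤ uᵢ c(t)` on
each side of `τ`, hence at `τ` by continuity. Since `u₂ = -u₁`, adding the two limits gives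
`2 |u₁| d(τ) ≤ 0`, so `d(τ) = 0`, and then `u₁ c(τ) = 0` with `u₁ ≠ 0`.
-/

open Filter Topology Set

lemma abs_mul_le_mul_of_forall_le {a b u : ℝ}
    (h : ∀ v ∈ Icc (-1 : ℝ) 1, v * a - |v| * b ≤ u * a - |u| * b) : |u| * b ≤ u * a := by
  have h₀ := h 0 ⟨by norm_num, by norm_num⟩
  simp only [zero_mul, abs_zero, sub_zero] at h₀
  linarith

lemma abs_mul_le_mul_of_eventually_forall_le {c d : ℝ → ℝ} {τ u : ℝ} {l : Filter ℝ} [l.NeBot]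
    (hl : l ≤ 𝓝 τ) (hc : ContinuousAt c τ) (hd : ContinuousAt d τ)
    (h : ∀ᶠ t in l, ∀ v ∈ Icc (-1 : ℝ) 1, v * c t - |v| * d t ≤ u * c t - |u| * d t) :
    |u| * d τ ≤ u * c τ :=
  le_of_tendsto_of_tendsto ((hd.tendsto.mono_left hl).const_mul _)
    ((hc.tendsto.mono_left hl).const_mul _) (h.mono fun _ ↦ abs_mul_le_mul_of_forall_le)

lemma eq_zero_and_eq_zero_of_abs_mul_le {a b u : ℝ} (hu : u ≠ 0) (hb : 0 ≤ b)
    (h₁ : |u| * b ≤ u * a) (h₂ : |-u| * b ≤ -u * a) : b = 0 ∧ a = 0 := by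
  rw [abs_neg] at h₂
  have hb0 : b = 0 := by
    have : |u| * b ≤ 0 := by linarith
    exact le_antisymm (nonpos_of_mul_nonpos_right this (abs_pos.mpr hu)) hb
  subst hb0
  exact ⟨rfl, (mul_eq_zero.mp (by linarith : u * a = 0)).resolve_left hu⟩

/-- If `u₁ ≠ u₂` are bang controls in `{-1,1}`, `c, d` continuous with `d ≥ 0`, and `u₁`
maximizes `v ↦ v·c(t) − |v|·d(t)` on `[-1,1]` for `t < τ` near `τ` while `u₂` maximizes for
`t > τ` near `τ`, then `d(τ) = 0` and `c(τ) = 0`. -/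
theorem stmt2 (c d : ℝ → ℝ) (hc : Continuous c) (hd : Continuous d)
    (hd0 : ∀ t, 0 ≤ d t)
    (u₁ u₂ : ℝ) (hu₁ : u₁ = -1 ∨ u₁ = 1) (hu₂ : u₂ = -1 ∨ u₂ = 1) (hne : u₁ ≠ u₂)
    (τ : ℝ)
    (hmax : ∃ δ > 0,
      (∀ t ∈ Set.Ioo (τ - δ) τ, ∀ v ∈ Set.Icc (-1 : ℝ) 1,
        v * c t - |v| * d t ≤ u₁ * c t - |u₁| * d t) ∧
      (∀ t ∈ Set.Ioo τ (τ + δ), ∀ v ∈ Set.Icc (-1 : ℝ) 1,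
        v * c t - |v| * d t ≤ u₂ * c t - |u₂| * d t)) :
    d τ = 0 ∧ c τ = 0 := by
  obtain ⟨δ, hδ, hbefore, hafter⟩ := hmax
  have hleft : |u₁| * d τ ≤ u₁ * c τ :=
    abs_mul_le_mul_of_eventually_forall_le nhdsWithin_le_nhds hc.continuousAt hd.continuousAt
      (eventually_of_mem (Ioo_mem_nhdsLT (by linarith)) hbefore)
  have hright : |u₂| * d τ ≤ u₂ * c τ :=
    abs_mul_le_mul_of_eventually_forall_le nhdsWithin_le_nhds hc.continuousAt hd.continuousAt
      (eventually_of_mem (Ioo_mem_nhdsGT (by linarith)) hafter)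
  have hopp : u₂ = -u₁ := by
    rcases hu₁ with rfl | rfl <;> rcases hu₂ with rfl | rfl <;> simp_all
  have hu₁0 : u₁ ≠ 0 := by rcases hu₁ with rfl | rfl <;> norm_num
  rw [hopp] at hright
  exact eq_zero_and_eq_zero_of_abs_mul_le hu₁0 (hd0 τ) hleft hright
end

section
/- Let α > 0 and X > 0, and set T_min = (1/α)·log((1 + √(1 − e^{−α²X}))/(1 − √(1 − e^{−α²X}))) and T_lim = (1/α)·log((1+√2)e^{α²X} − 1 + √(((1+√2)e^{α²X} − 1)² − 1)). Then 0 < T_min < T_lim. -/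
/-!
With `y = e^{α²X} > 1`, the logarithm in `T_lim` is by definition `arcosh ((1 + √2) y - 1)`, and the
one in `T_min` turns out to be `arcosh (2y - 1)`: with `s = √(1 - 1/y)` one has
`(1 + s) / (1 - s) = y (1 + s)² = (2y - 1) + 2ys` and `2ys = √((2y - 1)² - 1)`.
Since `1 < 2y - 1 < (1 + √2) y - 1` and `arcosh` is strictly increasing and positive on `(1, ∞)`,
`0 < T_min < T_lim`.
-/

open Real

lemma one_add_sqrt_div_one_sub_sqrt_eq {y : ℝ} (hy : 1 ≤ y) :
    (1 + √(1 - y⁻¹)) / (1 - √(1 - y⁻¹)) = 2 * y - 1 + √((2 * y - 1) ^ 2 - 1) := by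
  set s := √(1 - y⁻¹)
  have hy0 : 0 < y := by linarith
  have hs_sq : s ^ 2 = 1 - y⁻¹ :=
    sq_sqrt (sub_nonneg.mpr (inv_le_one_of_one_le₀ hy))
  have hs_lt : s < 1 :=
    (sqrt_lt' one_pos).mpr (by linarith [inv_pos.mpr hy0])
  have hys : y * s ^ 2 = y - 1 := by rw [hs_sq]; field_simp
  have hsqrt : √((2 * y - 1) ^ 2 - 1) = 2 * y * s := by
    rw [show (2 * y - 1) ^ 2 - 1 = (2 * y * s) ^ 2 by linear_combination (-4 * y) * hys,
      sqrt_sq (by positivity)]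
  rw [hsqrt, div_eq_iff (by linarith)]
  linear_combination 2 * hys

lemma log_one_add_sqrt_div_one_sub_sqrt {y : ℝ} (hy : 1 ≤ y) :
    log ((1 + √(1 - y⁻¹)) / (1 - √(1 - y⁻¹))) = arcosh (2 * y - 1) := by
  rw [one_add_sqrt_div_one_sub_sqrt_eq hy, arcosh]

/-- With `α > 0`, `X > 0`,
`T_min = (1/α)·log((1 + √(1 − e^{−α²X}))/(1 − √(1 − e^{−α²X})))` and
`T_lim = (1/α)·log((1+√2)e^{α²X} − 1 + √(((1+√2)e^{α²X} − 1)² − 1))`,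
one has `0 < T_min < T_lim`. -/
theorem stmt14 (α X : ℝ) (hα : 0 < α) (hX : 0 < X) :
    let Tmin : ℝ := (1 / α) * Real.log
      ((1 + Real.sqrt (1 - Real.exp (-(α ^ 2 * X)))) /
        (1 - Real.sqrt (1 - Real.exp (-(α ^ 2 * X)))))
    let Tlim : ℝ := (1 / α) * Real.log
      ((1 + Real.sqrt 2) * Real.exp (α ^ 2 * X) - 1 +
        Real.sqrt (((1 + Real.sqrt 2) * Real.exp (α ^ 2 * X) - 1) ^ 2 - 1))
    0 < Tmin ∧ Tmin < Tlim := by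
  intro Tmin Tlim
  set y := exp (α ^ 2 * X)
  have hy : 1 < y := one_lt_exp_iff.mpr (by positivity)
  have hTmin : Tmin = 1 / α * arcosh (2 * y - 1) := by
    rw [← log_one_add_sqrt_div_one_sub_sqrt hy.le, ← exp_neg]
  have hTlim : Tlim = 1 / α * arcosh ((1 + √2) * y - 1) := rfl
  have hlt : 2 * y - 1 < (1 + √2) * y - 1 := by nlinarith [one_lt_sqrt_two]
  have hpos : 0 < arcosh (2 * y - 1) := arcosh_pos (by linarith)
  rw [hTmin, hTlim]
  refine ⟨by positivity, mul_lt_mul_of_pos_left ?_ (by positivity)⟩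
  exact (arcosh_lt_arcosh (by linarith) (by linarith)).mpr hlt
end
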